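/- (Long-time stability of the regularized gradient flow) Let M ∈ ℝ^{r×r} be fixed, β > 0, and let S : [0,∞) → ℝ^{r×r} be a differentiable solution of Ṡ(t) + β∇R(S(t)) + S(t) = M (on the set where R(S(t)) > 0). Then for all t ≥ 0: (1/2)‖S(t)−M‖_F² + 2β∫₀ᵗ e^{τ−t} R(S(τ)) dτ ≤ (1/2)e^{−t}‖S(0)−M‖_F² + 2(1−e^{−t})β(1+2β)‖M‖_F². -/

import Mathlib

open Matrix BigOperators

noncomputable def frob {m n : ℕ} (A : Matrix (Fin m) (Fin n) ℝ) : ℝ :=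
  Real.sqrt (∑ i, ∑ j, (A i j) ^ 2)

noncomputable def finner {m n : ℕ} (A B : Matrix (Fin m) (Fin n) ℝ) : ℝ :=
  (Bᵀ * A).trace

noncomputable def Rreg {r : ℕ} (S : Matrix (Fin r) (Fin r) ℝ) : ℝ :=
  frob (Sᵀ * S - ((frob S) ^ 2 / (r : ℝ)) • 1)

noncomputable def sv {r : ℕ} (S : Matrix (Fin r) (Fin r) ℝ) (i : Fin r) : ℝ :=
  Real.sqrt ((Matrix.isHermitian_conjTranspose_mul_self S : (Sᵀ * S).IsHermitian).eigenvalues i)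

noncomputable def gradR {r : ℕ} (S : Matrix (Fin r) (Fin r) ℝ) : Matrix (Fin r) (Fin r) ℝ :=
  (2 / Rreg S) • (S * (Sᵀ * S - ((frob S) ^ 2 / (r : ℝ)) • 1))

attribute [local instance] Matrix.frobeniusNormedAddCommGroup Matrix.frobeniusNormedSpace

/-! With `u = ½‖S - M‖²` the flow gives `u' = -2u - β⟪∇R(S), S - M⟫`. Since `SᵀS - (‖S‖²/r)I`
is trace-free, `⟪∇R(S), S⟫ = 2R(S)`, while Cauchy–Schwarz and submultiplicativity give
`β⟪∇R(S), M⟫ ≤ 2β‖S‖‖M‖ ≤ ½‖S - M‖² + 2β(1 + 2β)‖M‖²`. Hence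
`u' + u + 2βR(S) ≤ 2β(1 + 2β)‖M‖²`, and Grönwall's argument with the integrating factor `eᵗ`
integrates this differential inequality. -/

open Real Set

lemma frob_eq_norm {m n : ℕ} (A : Matrix (Fin m) (Fin n) ℝ) : frob A = ‖A‖ := by
  rw [Matrix.frobenius_norm_def, frob, Real.sqrt_eq_rpow]
  simp

lemma frob_nonneg {m n : ℕ} (A : Matrix (Fin m) (Fin n) ℝ) : 0 ≤ frob A :=
  Real.sqrt_nonneg _

lemma frob_mul_le {r : ℕ} (A B : Matrix (Fin r) (Fin r) ℝ) : frob (A * B) ≤ frob A * frob B := by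
  simpa only [frob_eq_norm] using Matrix.frobenius_norm_mul A B

lemma frob_le_frob_sub_add {m n : ℕ} (A B : Matrix (Fin m) (Fin n) ℝ) :
    frob A ≤ frob (A - B) + frob B := by
  simpa only [frob_eq_norm] using norm_le_norm_sub_add A B

lemma continuous_Rreg {r : ℕ} : Continuous (Rreg : Matrix (Fin r) (Fin r) ℝ → ℝ) := by
  unfold Rreg
  simp only [frob_eq_norm]
  fun_prop

lemma finner_eq_sum {m n : ℕ} (A B : Matrix (Fin m) (Fin n) ℝ) :
    finner A B = ∑ i, ∑ j, A i j * B i j := by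
  simp only [finner, Matrix.trace, Matrix.diag_apply, Matrix.mul_apply, Matrix.transpose_apply]
  rw [Finset.sum_comm]
  simp only [mul_comm]

lemma finner_self {m n : ℕ} (A : Matrix (Fin m) (Fin n) ℝ) : finner A A = frob A ^ 2 := by
  rw [finner_eq_sum, frob, Real.sq_sqrt (by positivity)]
  simp only [sq]

lemma finner_le_frob_mul_frob {m n : ℕ} (A B : Matrix (Fin m) (Fin n) ℝ) :
    finner A B ≤ frob A * frob B := by
  have h := Real.sum_mul_le_sqrt_mul_sqrt Finset.univ (fun p : Fin m × Fin n => A p.1 p.2)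
    (fun p => B p.1 p.2)
  simp only [Fintype.sum_prod_type] at h
  rwa [finner_eq_sum, frob, frob]

lemma finner_sub_left {m n : ℕ} (A B C : Matrix (Fin m) (Fin n) ℝ) :
    finner (A - B) C = finner A C - finner B C := by
  simp only [finner, Matrix.mul_sub, Matrix.trace_sub]

lemma finner_sub_right {m n : ℕ} (A B C : Matrix (Fin m) (Fin n) ℝ) :
    finner A (B - C) = finner A B - finner A C := by
  simp only [finner, Matrix.transpose_sub, Matrix.sub_mul, Matrix.trace_sub]

lemma finner_neg_left {m n : ℕ} (A B : Matrix (Fin m) (Fin n) ℝ) :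
    finner (-A) B = -finner A B := by
  simp only [finner, Matrix.mul_neg, Matrix.trace_neg]

lemma finner_smul_left {m n : ℕ} (c : ℝ) (A B : Matrix (Fin m) (Fin n) ℝ) :
    finner (c • A) B = c * finner A B := by
  simp only [finner, Matrix.mul_smul, Matrix.trace_smul, smul_eq_mul]

theorem HasDerivAt.frob_sq {m n : ℕ} {A : ℝ → Matrix (Fin m) (Fin n) ℝ}
    {A' : Matrix (Fin m) (Fin n) ℝ} {x : ℝ} (hA : HasDerivAt A A' x) :
    HasDerivAt (fun y => frob (A y) ^ 2) (2 * finner A' (A x)) x := by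
  have hentry : ∀ i j, HasDerivAt (fun y => A y i j) (A' i j) x := fun i j =>
    (LinearMap.toContinuousLinearMap (Matrix.entryLinearMap ℝ ℝ i j)).hasFDerivAt.comp_hasDerivAt
      x hA
  have hsum : HasDerivAt (fun y => ∑ i, ∑ j, A y i j * A y i j)
      (∑ i, ∑ j, (A' i j * A x i j + A x i j * A' i j)) x :=
    HasDerivAt.fun_sum fun i _ => HasDerivAt.fun_sum fun j _ => (hentry i j).fun_mul (hentry i j)
  have hfun : (fun y => frob (A y) ^ 2) = fun y => ∑ i, ∑ j, A y i j * A y i j := by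
    funext y
    rw [← finner_self, finner_eq_sum]
  rw [hfun]
  convert hsum using 1
  simp only [finner_eq_sum, Finset.mul_sum]
  congr! 2 with i _ j _
  ring

lemma trace_gram_deviator {r : ℕ} (S : Matrix (Fin r) (Fin r) ℝ) :
    (Sᵀ * S - (frob S ^ 2 / r) • 1).trace = 0 := by
  rcases Nat.eq_zero_or_pos r with rfl | hr
  · simp
  · rw [Matrix.trace_sub, Matrix.trace_smul, Matrix.trace_one, Fintype.card_fin, ← finner,
      finner_self, smul_eq_mul]
    field_simp
    ring

-- At `Rreg S = 0` both sides vanish: `gradR S = 0` as `2 / 0 = 0`.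
lemma finner_gradR_self {r : ℕ} (S : Matrix (Fin r) (Fin r) ℝ) :
    finner (gradR S) S = 2 * Rreg S := by
  set X := Sᵀ * S - (frob S ^ 2 / r) • 1 with hX
  have hXt : Xᵀ = X := by simp [hX, Matrix.transpose_sub, Matrix.transpose_mul]
  have hRX : Rreg S = frob X := rfl
  have hgram : Sᵀ * S = X + (frob S ^ 2 / r) • 1 := by rw [hX, sub_add_cancel]
  have hSX : finner (S * X) S = frob X ^ 2 := by
    rw [finner, ← Matrix.mul_assoc, hgram, Matrix.add_mul, Matrix.trace_add, Matrix.smul_mul,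
      Matrix.one_mul, Matrix.trace_smul, trace_gram_deviator, smul_zero, add_zero, ← finner_self, finner, hXt]
  rw [gradR, ← hX, finner_smul_left, hSX, hRX]
  rcases eq_or_ne (frob X) 0 with h | h
  · simp [h]
  · field_simp

lemma finner_gradR_le {r : ℕ} (S B : Matrix (Fin r) (Fin r) ℝ) :
    finner (gradR S) B ≤ 2 * frob S * frob B := by
  set X := Sᵀ * S - (frob S ^ 2 / r) • 1 with hX
  have hRX : Rreg S = frob X := rfl
  rw [gradR, ← hX, finner_smul_left, hRX]
  rcases eq_or_ne (frob X) 0 with h | h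
  · rw [h, div_zero, zero_mul, mul_assoc]
    exact mul_nonneg zero_le_two (mul_nonneg (frob_nonneg S) (frob_nonneg B))
  calc 2 / frob X * finner (S * X) B ≤ 2 / frob X * (frob S * frob X * frob B) :=
        mul_le_mul_of_nonneg_left ((finner_le_frob_mul_frob _ _).trans
          (mul_le_mul_of_nonneg_right (frob_mul_le S X) (frob_nonneg B)))
          (div_nonneg zero_le_two (frob_nonneg X))
    _ = 2 * frob S * frob B := by field_simp

lemma finner_flow_energy_le {r : ℕ} {β : ℝ} (hβ : 0 ≤ β) (S M : Matrix (Fin r) (Fin r) ℝ) :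
    finner (M - S - β • gradR S) (S - M) + 1 / 2 * frob (S - M) ^ 2 + 2 * β * Rreg S
      ≤ 2 * β * (1 + 2 * β) * frob M ^ 2 := by
  have hexpand : finner (M - S - β • gradR S) (S - M)
      = -frob (S - M) ^ 2 - 2 * β * Rreg S + β * finner (gradR S) M := by
    rw [finner_sub_left, ← neg_sub S M, finner_neg_left, finner_self, finner_smul_left,
      finner_sub_right, finner_gradR_self]
    ring
  have hgrad : β * finner (gradR S) M ≤ 2 * β * frob (S - M) * frob M + 2 * β * frob M ^ 2 := by
    have := mul_le_mul_of_nonneg_right (frob_le_frob_sub_add S M) (frob_nonneg M)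
    nlinarith [finner_gradR_le S M]
  rw [hexpand]
  nlinarith [sq_nonneg (frob (S - M) - 2 * β * frob M), mul_nonneg hβ (sq_nonneg (frob M))]

-- Integrating factor: `eᵗ u(t) + ∫₀ᵗ e^τ g(τ) dτ - C eᵗ` is antitone.
theorem add_integral_exp_mul_le_of_deriv_add_le {u u' g : ℝ → ℝ} {C : ℝ}
    (hu : ∀ x, 0 ≤ x → HasDerivAt u (u' x) x) (hg : ContinuousOn g (Ici 0))
    (hbound : ∀ x, 0 ≤ x → u' x + u x + g x ≤ C) {t : ℝ} (ht : 0 ≤ t) :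
    u t + ∫ τ in (0 : ℝ)..t, exp (τ - t) * g τ ≤ exp (-t) * u 0 + (1 - exp (-t)) * C := by
  set G : ℝ → ℝ := fun x => ∫ τ in (0 : ℝ)..x, exp τ * g τ
  have hcont : ContinuousOn (fun τ => exp τ * g τ) (Ici 0) :=
    continuous_exp.continuousOn.mul hg
  have hG : ∀ x, 0 < x → HasDerivAt G (exp x * g x) x := fun x hx =>
    intervalIntegral.integral_hasDerivAt_right
      ((hcont.mono Icc_subset_Ici_self).intervalIntegrable_of_Icc hx.le)
      ((hcont.mono Ioi_subset_Ici_self).stronglyMeasurableAtFilter isOpen_Ioi x hx)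
      (hcont.continuousAt (Ici_mem_nhds hx))
  have hGcont : ContinuousOn G (Icc 0 t) := by
    have := intervalIntegral.continuousOn_primitive_interval (μ := MeasureTheory.volume)
      (a := 0) (b := t) (f := fun τ => exp τ * g τ)
    rw [uIcc_of_le ht] at this
    exact this ((hcont.mono Icc_subset_Ici_self).integrableOn_Icc)
  set F : ℝ → ℝ := fun x => exp x * u x + G x - C * exp x
  have hanti : AntitoneOn F (Icc 0 t) := by
    refine antitoneOn_of_hasDerivWithinAt_nonpos
      (f' := fun x => exp x * (u' x + u x + g x - C)) (convex_Icc 0 t) ?_ ?_ ?_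
    · exact ((continuous_exp.continuousOn.mul fun x hx =>
        (hu x hx.1).continuousAt.continuousWithinAt).add hGcont).sub
        (continuous_exp.continuousOn.const_smul C)
    · intro x hx
      rw [interior_Icc] at hx
      exact ((((hasDerivAt_exp x).mul (hu x hx.1.le)).add (hG x hx.1)).sub
        ((hasDerivAt_exp x).const_mul C)).hasDerivWithinAt.congr_deriv (by ring)
    · intro x hx
      rw [interior_Icc] at hx
      exact mul_nonpos_of_nonneg_of_nonpos (exp_pos x).le (by linarith [hbound x hx.1.le])
  have hFt : F t ≤ F 0 := hanti ⟨le_rfl, ht⟩ ⟨ht, le_rfl⟩ ht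
  have hGt : ∫ τ in (0 : ℝ)..t, exp (τ - t) * g τ = exp (-t) * G t := by
    rw [← intervalIntegral.integral_const_mul]
    refine intervalIntegral.integral_congr fun τ _ => ?_
    simp only [Real.exp_sub, Real.exp_neg]
    ring
  have hexp : exp (-t) * exp t = 1 := by rw [← exp_add, neg_add_cancel, exp_zero]
  have hF0 : F 0 = u 0 - C := by simp [F, G]
  rw [hF0] at hFt
  rw [hGt]
  linear_combination exp (-t) * hFt + (C - u t) * hexp

theorem stmt12_general {r : ℕ} (β : ℝ) (hβ : 0 < β) (M : Matrix (Fin r) (Fin r) ℝ)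
    (S : ℝ → Matrix (Fin r) (Fin r) ℝ)
    (hode : ∀ t, 0 ≤ t → HasDerivAt S (M - S t - β • gradR (S t)) t) :
    ∀ t, 0 ≤ t →
      (1 / 2) * frob (S t - M) ^ 2
          + 2 * β * ∫ τ in (0 : ℝ)..t, Real.exp (τ - t) * Rreg (S τ)
        ≤ (1 / 2) * Real.exp (-t) * frob (S 0 - M) ^ 2
          + 2 * (1 - Real.exp (-t)) * β * (1 + 2 * β) * frob M ^ 2 := by
  intro t ht
  have henergy : ∀ x, 0 ≤ x → HasDerivAt (fun y => 1 / 2 * frob (S y - M) ^ 2)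
      (finner (M - S x - β • gradR (S x)) (S x - M)) x := fun x hx =>
    ((((hode x hx).sub_const M).frob_sq).const_mul (1 / 2)).congr_deriv (by ring)
  have hdiss : ContinuousOn (fun x => 2 * β * Rreg (S x)) (Ici 0) :=
    (continuous_Rreg.comp_continuousOn fun x hx =>
      (hode x hx).continuousAt.continuousWithinAt).const_smul (2 * β)
  have h := add_integral_exp_mul_le_of_deriv_add_le henergy hdiss
    (fun x _ => finner_flow_energy_le hβ.le (S x) M) ht
  have hint : ∫ τ in (0 : ℝ)..t, exp (τ - t) * (2 * β * Rreg (S τ))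
      = 2 * β * ∫ τ in (0 : ℝ)..t, exp (τ - t) * Rreg (S τ) := by
    rw [← intervalIntegral.integral_const_mul]
    congr 1 with τ
    ring
  rw [hint] at h
  linarith

theorem stmt12 {r : ℕ} (β : ℝ) (hβ : 0 < β) (M : Matrix (Fin r) (Fin r) ℝ)
    (S : ℝ → Matrix (Fin r) (Fin r) ℝ)
    (hpos : ∀ t, 0 ≤ t → 0 < Rreg (S t))
    (hode : ∀ t, 0 ≤ t → HasDerivAt S (M - S t - β • gradR (S t)) t) :
    ∀ t, 0 ≤ t →
      (1 / 2) * frob (S t - M) ^ 2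
          + 2 * β * ∫ τ in (0 : ℝ)..t, Real.exp (τ - t) * Rreg (S τ)
        ≤ (1 / 2) * Real.exp (-t) * frob (S 0 - M) ^ 2
          + 2 * (1 - Real.exp (-t)) * β * (1 + 2 * β) * frob M ^ 2 :=
  stmt12_general β hβ M S hode
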